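/- Let R be a commutative ring, k ≥ 2, and let S = {y₁ < y₂ < ⋯ < y_n} be a gcd-closed set of positive integers (i.e., gcd(y_i, y_j) ∈ S for all i, j). Let F : ℕ⁺ → R and write f = F ∗ μ for its Dirichlet-Möbius inverse, so f(d) = ∑_{e ∣ d} F(e) μ(d/e). Then ∑_{(σ₂,…,σ_k) ∈ (S_n)^{k-1}} sign(σ₂)⋯sign(σ_k) · ∏_{i=1}^n F(gcd(y_i, y_{σ₂(i)}, …, y_{σ_k(i)})) = ∏_{i=1}^n ( ∑_{d ∣ y_i, d ∤ y_j for all j < i} f(d) ). -/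

import Mathlib

/-!
Let `E i r = [y r ∣ y i]` and `c r = ∑ f d` over the divisors `d` of `y r` dividing no earlier
`y j`. In a gcd-closed set, the first `y r` divisible by a divisor `d` of `y t` itself divides
`y t`, so Möbius inversion gives `F (y t) = ∑_{y r ∣ y t} c r`; as the gcd of elements of `S`
lies in `S`, `F (gcd (y i, y (v 1), …)) = ∑_r E i r ∏_j E (v j) r c r`. Expanding the products,
the signed sum becomes `∑_φ ∏_i E i (φ i) c (φ i) · det (E with columns φ) ^ (k - 1)`, and since
`E` is unitriangular only `φ = id` contributes.
-/

/-- The gcd `gcd(a, v 0, v 1, …)` of a positive integer `a` with a tuple `v` of positive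
integers. -/
def gcdAll {p : ℕ} (a : ℕ) (v : Fin p → ℕ) : ℕ :=
  (List.ofFn v).foldr Nat.gcd a

open Finset Equiv

section Hyperdeterminant

variable {R ι : Type*} [CommRing R] [Fintype ι] [DecidableEq ι]

/-- Choosing the summation index `φ i` in each factor, the sum over each `σ j` becomes the Leibniz
formula for the determinant of the columns `φ` of `E`. -/
theorem sum_sign_mul_prod_sum_eq {κ : Type*} [Fintype κ] [DecidableEq κ] (E : Matrix ι ι R)
    (c : ι → R) :
    ∑ σ : κ → Perm ι, ((∏ j, (Perm.sign (σ j) : ℤ) : ℤ) : R) *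
        ∏ i, ∑ r, E i r * (∏ j, E (σ j i) r) * c r =
      ∑ φ : ι → ι, (∏ i, E i (φ i) * c (φ i)) * (E.submatrix id φ).det ^ Fintype.card κ := by
  have hdet (φ : ι → ι) :
      (E.submatrix id φ).det = ∑ τ : Perm ι, (Perm.sign τ : ℤ) * ∏ i, E (τ i) (φ i) :=
    Matrix.det_apply' _
  simp_rw [Fintype.prod_sum, mul_sum]
  rw [sum_comm]
  refine sum_congr rfl fun φ _ => ?_
  rw [hdet, ← Finset.card_univ, ← prod_const, Fintype.prod_sum, mul_sum]
  refine sum_congr rfl fun σ _ => ?_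
  push_cast
  simp only [prod_mul_distrib]
  rw [prod_comm (f := fun i j => E (σ j i) (φ i))]
  ring

theorem eq_id_of_injective_of_le {α : Type*} [LinearOrder α] [WellFoundedLT α] {φ : α → α}
    (hinj : φ.Injective) (hle : ∀ i, φ i ≤ i) : φ = id := by
  funext i
  induction i using WellFoundedLT.induction with
  | _ i ih => exact (hle i).eq_or_lt.resolve_right fun hlt => hlt.ne (hinj (ih _ hlt))

/-- Only `φ = id` survives: if `i < φ i` for some `i` the product vanishes, and otherwise
`φ ≤ id` with `φ ≠ id` is not injective, so two columns of the determinant agree. -/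
theorem sum_prod_mul_det_pow_of_isLowerTriangular [LinearOrder ι] {E : Matrix ι ι R}
    (hE : E.IsLowerTriangular) (c : ι → R) {q : ℕ} (hq : q ≠ 0) :
    ∑ φ : ι → ι, (∏ i, E i (φ i) * c (φ i)) * (E.submatrix id φ).det ^ q =
      ∏ i, E i i ^ (q + 1) * c i := by
  rw [sum_eq_single id]
  · rw [Matrix.submatrix_id_id, Matrix.det_of_isLowerTriangular E hE, ← prod_pow,
      ← prod_mul_distrib]
    exact prod_congr rfl fun i _ => by simp only [id]; ring
  · intro φ _ hφ
    by_cases hle : ∀ i, φ i ≤ i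
    · obtain ⟨a, b, hab, hne⟩ := Function.not_injective_iff.mp
        fun hinj => hφ (eq_id_of_injective_of_le hinj hle)
      rw [Matrix.det_zero_of_column_eq hne fun k => by simp [hab], zero_pow hq, mul_zero]
    · obtain ⟨i, hi⟩ := not_forall.mp hle
      rw [prod_eq_zero (mem_univ i) (by rw [hE (by simpa using hi), zero_mul]), zero_mul]
  · exact fun h => absurd (mem_univ _) h

end Hyperdeterminant

theorem dvd_gcdAll_iff {p : ℕ} {d a : ℕ} {v : Fin p → ℕ} :
    d ∣ gcdAll a v ↔ d ∣ a ∧ ∀ j, d ∣ v j := by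
  suffices ∀ l : List ℕ, d ∣ l.foldr Nat.gcd a ↔ d ∣ a ∧ ∀ x ∈ l, d ∣ x by
    simp [gcdAll, this]
  intro l
  induction l with
  | nil => simp
  | cons x l ih => simp [Nat.dvd_gcd_iff, ih, and_left_comm]

theorem gcdAll_mem {s : Set ℕ} (hs : ∀ a ∈ s, ∀ b ∈ s, Nat.gcd a b ∈ s) {p : ℕ} {a : ℕ}
    {v : Fin p → ℕ} (ha : a ∈ s) (hv : ∀ j, v j ∈ s) : gcdAll a v ∈ s := by
  suffices ∀ l : List ℕ, (∀ x ∈ l, x ∈ s) → l.foldr Nat.gcd a ∈ s from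
    this _ (by simpa [List.forall_mem_ofFn_iff] using hv)
  intro l
  induction l with
  | nil => exact fun _ => ha
  | cons x l ih =>
    intro hl
    exact hs x (hl x List.mem_cons_self) _ (ih fun z hz => hl z (List.mem_cons_of_mem _ hz))

section MoebiusInversion

open ArithmeticFunction
open scoped ArithmeticFunction.Moebius

variable {R : Type*} [CommRing R]

def mulMoebius (F : ℕ → R) (d : ℕ) : R :=
  ∑ e ∈ d.divisors, F e * ((μ (d / e) : ℤ) : R)

theorem sum_divisors_mulMoebius (F : ℕ → R) {m : ℕ} (hm : 0 < m) :
    ∑ d ∈ m.divisors, mulMoebius F d = F m := by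
  refine sum_eq_iff_sum_mul_moebius_eq.mpr (fun d _ => ?_) m hm
  rw [Nat.sum_divisorsAntidiagonal' (fun a b => (μ a : R) * F b), mulMoebius]
  exact sum_congr rfl fun e _ => mul_comm _ _

end MoebiusInversion

section GcdClosed

variable {ι : Type*} [LinearOrder ι] {y : ι → ℕ}

/-- `gcd (y r) (y t)` is some `y l` with `l ≤ r` and `d ∣ y l`, so `l = r`. -/
theorem dvd_of_forall_lt_not_dvd (hpos : ∀ i, 0 < y i) (hmono : StrictMono y)
    (hgcd : ∀ i j, ∃ l, Nat.gcd (y i) (y j) = y l) {d : ℕ} {r t : ι} (hdr : d ∣ y r)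
    (hdt : d ∣ y t) (hmin : ∀ j, j < r → ¬ d ∣ y j) : y r ∣ y t := by
  obtain ⟨l, hl⟩ := hgcd r t
  have hlr : l ≤ r :=
    hmono.le_iff_le.mp (Nat.le_of_dvd (hpos r) (hl ▸ Nat.gcd_dvd_left _ _))
  have hrl : r ≤ l := not_lt.mp fun h => hmin l h (hl ▸ Nat.dvd_gcd hdr hdt)
  rw [← le_antisymm hlr hrl, ← hl]
  exact Nat.gcd_dvd_right _ _

variable [Fintype ι]

def firstDivisors (y : ι → ℕ) (r : ι) : Finset ℕ :=
  (y r).divisors.filter fun d => ∀ j, j < r → ¬ d ∣ y j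

theorem pairwise_disjoint_firstDivisors :
    Pairwise (Function.onFun Disjoint (firstDivisors y)) := by
  intro r r' hne
  refine disjoint_left.mpr fun d hd hd' => ?_
  simp only [firstDivisors, mem_filter, Nat.mem_divisors] at hd hd'
  rcases hne.lt_or_gt with h | h
  · exact hd'.2 r h hd.1.1
  · exact hd.2 r' h hd'.1.1

theorem divisors_eq_biUnion_firstDivisors (hpos : ∀ i, 0 < y i) (hmono : StrictMono y)
    (hgcd : ∀ i j, ∃ l, Nat.gcd (y i) (y j) = y l) (t : ι) :
    (y t).divisors = (univ.filter fun r => y r ∣ y t).biUnion (firstDivisors y) := by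
  ext d
  simp only [mem_biUnion, mem_filter, mem_univ, true_and, firstDivisors, Nat.mem_divisors]
  constructor
  · rintro ⟨hdt, -⟩
    obtain ⟨r, hdr, hmin⟩ := (univ.filter fun r => d ∣ y r).exists_min_image id ⟨t, by simpa⟩
    simp only [mem_filter, mem_univ, true_and, id] at hdr hmin
    have hmin' : ∀ j, j < r → ¬ d ∣ y j := fun j hj hdj => (hmin j hdj).not_gt hj
    exact ⟨r, dvd_of_forall_lt_not_dvd hpos hmono hgcd hdr hdt hmin', ⟨hdr, (hpos r).ne'⟩, hmin'⟩
  · rintro ⟨r, hrt, ⟨hdr, -⟩, -⟩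
    exact ⟨hdr.trans hrt, (hpos t).ne'⟩

end GcdClosed

section DivisibilityMatrix

variable (R : Type*) [CommRing R] {ι : Type*} (y : ι → ℕ)

def divisibilityMatrix : Matrix ι ι R :=
  Matrix.of fun i r => if y r ∣ y i then 1 else 0

variable {y}

theorem divisibilityMatrix_apply_self (i : ι) : divisibilityMatrix R y i i = 1 :=
  if_pos dvd_rfl

variable [LinearOrder ι]

theorem isLowerTriangular_divisibilityMatrix (hpos : ∀ i, 0 < y i) (hmono : StrictMono y) :
    (divisibilityMatrix R y).IsLowerTriangular := fun i _ hir =>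
  if_neg fun hdvd =>
    (hmono (OrderDual.toDual_lt_toDual.mp hir)).not_ge (Nat.le_of_dvd (hpos i) hdvd)

variable {R} [Fintype ι]

theorem apply_gcdAll_eq_sum (hpos : ∀ i, 0 < y i) (hmono : StrictMono y)
    (hgcd : ∀ i j, ∃ l, Nat.gcd (y i) (y j) = y l) (F : ℕ → R) (i : ι) {q : ℕ}
    (v : Fin q → ι) :
    F (gcdAll (y i) fun j => y (v j)) =
      ∑ r, divisibilityMatrix R y i r * (∏ j, divisibilityMatrix R y (v j) r) *
        ∑ d ∈ firstDivisors y r, mulMoebius F d := by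
  have hclosed : ∀ a ∈ Set.range y, ∀ b ∈ Set.range y, Nat.gcd a b ∈ Set.range y := by
    rintro _ ⟨a, rfl⟩ _ ⟨b, rfl⟩
    exact (hgcd a b).imp fun _ h => h.symm
  obtain ⟨t, ht⟩ := gcdAll_mem hclosed ⟨i, rfl⟩ fun j => ⟨v j, rfl⟩
  rw [← ht, ← sum_divisors_mulMoebius F (hpos t),
    divisors_eq_biUnion_firstDivisors hpos hmono hgcd t,
    sum_biUnion (pairwise_disjoint_firstDivisors.set_pairwise _), sum_filter]
  refine sum_congr rfl fun r _ => ?_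
  have hdvd : y r ∣ y t ↔ y r ∣ y i ∧ ∀ j, y r ∣ y (v j) := by rw [ht, dvd_gcdAll_iff]
  simp only [divisibilityMatrix, Matrix.of_apply, Fintype.prod_boole, ite_mul, one_mul,
    zero_mul, hdvd, ite_and]

end DivisibilityMatrix


/-- let `R` be a commutative ring, `k = p + 2 ≥ 2`, and `S = {y₁ < ⋯ < y_n}` a
gcd-closed set of positive integers.  Let `F : ℕ⁺ → R` and `f = F ∗ μ`, i.e.
`f(d) = ∑_{e ∣ d} F(e) μ(d/e)`.  Then
`∑_{(σ₂,…,σ_k) ∈ (S_n)^{k-1}} sign(σ₂)⋯sign(σ_k) ∏ᵢ F(gcd(yᵢ, y_{σ₂(i)}, …, y_{σ_k(i)}))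
 = ∏ᵢ ( ∑_{d ∣ yᵢ, d ∤ y_j for all j < i} f(d) )`. -/
theorem hyperdet_gcd_closed {R : Type*} [CommRing R] {n p : ℕ}
    (y : Fin n → ℕ) (hpos : ∀ i, 0 < y i) (hmono : StrictMono y)
    (hgcd : ∀ i j : Fin n, ∃ l : Fin n, Nat.gcd (y i) (y j) = y l)
    (F : ℕ → R) :
    ∑ σ : Fin (p + 1) → Equiv.Perm (Fin n),
        ((∏ j, (Equiv.Perm.sign (σ j) : ℤ)) : ℤ) *
          ∏ i : Fin n, F (gcdAll (y i) (fun j => y (σ j i))) =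
      ∏ i : Fin n,
        ∑ d ∈ (y i).divisors.filter (fun d => ∀ j : Fin n, j < i → ¬ d ∣ y j),
          ∑ e ∈ d.divisors, F e * ((ArithmeticFunction.moebius (d / e) : ℤ) : R) := by
  simp only [apply_gcdAll_eq_sum hpos hmono hgcd F]
  rw [sum_sign_mul_prod_sum_eq, sum_prod_mul_det_pow_of_isLowerTriangular
    (isLowerTriangular_divisibilityMatrix R hpos hmono)
    (fun r => ∑ d ∈ firstDivisors y r, mulMoebius F d) (by simp)]
  simp only [divisibilityMatrix_apply_self, one_pow, one_mul, firstDivisors, mulMoebius]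
  -- the filters differ only in their `Decidable` instances (general linear order vs. `Fin n`)
  congr!
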